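/- arXiv:1510.04639 — 9 statements merged into one kernel-verified Lean document; each statement's English description precedes it below -/
import Mathlib

section
/- For every real number p > 1, the family σ ↦ λ_σ^{-p}, indexed by all finite subsets σ of ℕ, is summable, and its sum satisfies ∑_{σ ∈ Γ} λ_σ^{-p} ≤ exp( ∑_{k=1}^∞ k^{-p} ). -/
open Filter Topology

/-- `lam σ = ∏_{k ∈ σ} (k+1)`, with `lam ∅ = 1`. -/
noncomputable def lam (σ : Finset ℕ) : ℝ := ∏ k ∈ σ, ((k : ℝ) + 1)

/-- For every real `p > 1`, the family `σ ↦ lam σ ^ (-p)` over all finite subsets of `ℕ`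
is summable and `∑_{σ ∈ Γ} lam σ ^ (-p) ≤ exp (∑_{k=1}^∞ k^(-p))`. -/
theorem stmt0 (p : ℝ) (hp : 1 < p) :
    Summable (fun σ : Finset ℕ => lam σ ^ (-p)) ∧
    ∑' σ : Finset ℕ, lam σ ^ (-p) ≤ Real.exp (∑' k : ℕ, ((k : ℝ) + 1) ^ (-p)) := by
  set a : ℕ → ℝ := fun k => ((k : ℝ) + 1) ^ (-p) with ha
  have ha0 : ∀ k, 0 ≤ a k := fun k => Real.rpow_nonneg (by positivity) _
  have hsum : Summable a := by
    have h1 : Summable (fun n : ℕ => (n : ℝ) ^ (-p)) := by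
      rw [Real.summable_nat_rpow]; linarith
    have h2 := (summable_nat_add_iff 1).2 h1
    apply h2.congr
    intro k
    push_cast
    ring_nf
    simp only [ha]
    ring_nf
  have hlam : ∀ σ : Finset ℕ, lam σ ^ (-p) = ∏ k ∈ σ, a k := by
    intro σ
    rw [lam, ← Real.finset_prod_rpow σ _ (fun k _ => by positivity)]
  have hnn : ∀ σ : Finset ℕ, 0 ≤ lam σ ^ (-p) := by
    intro σ; rw [hlam]; exact Finset.prod_nonneg fun k _ => ha0 k
  have key : ∀ S : Finset (Finset ℕ), ∑ σ ∈ S, lam σ ^ (-p) ≤ Real.exp (∑' k, a k) := by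
    intro S
    set T := S.sup id with hT
    have hsub : S ⊆ T.powerset := by
      intro σ hσ; rw [Finset.mem_powerset]; exact Finset.le_sup (f := id) hσ
    calc ∑ σ ∈ S, lam σ ^ (-p)
        ≤ ∑ σ ∈ T.powerset, lam σ ^ (-p) :=
          Finset.sum_le_sum_of_subset_of_nonneg hsub (fun σ _ _ => hnn σ)
      _ = ∏ k ∈ T, (a k + 1) := by
          rw [Finset.prod_add]
          simp [hlam]
      _ ≤ ∏ k ∈ T, Real.exp (a k) :=
          Finset.prod_le_prod (fun k _ => by positivity)
            (fun k _ => by linarith [Real.add_one_le_exp (a k)])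
      _ = Real.exp (∑ k ∈ T, a k) := (Real.exp_sum _ _).symm
      _ ≤ Real.exp (∑' k, a k) :=
          Real.exp_le_exp.2 (hsum.sum_le_tsum T (fun k _ => ha0 k))
  have hS : Summable (fun σ : Finset ℕ => lam σ ^ (-p)) :=
    summable_of_sum_le hnn key
  exact ⟨hS, hS.tsum_le_of_sum_le key⟩
end

section
/- Let F : Γ → ℂ and suppose there are constants C ≥ 0 and p ≥ 0 such that |F(σ)| ≤ C·λ_σ^p for all σ ∈ Γ. Then for every real q > p + 1/2, the family σ ↦ λ_σ^{-2q}|F(σ)|² is summable and ( ∑_{σ∈Γ} λ_σ^{-2q}|F(σ)|² )^{1/2} ≤ C·( ∑_{σ∈Γ} λ_σ^{-2(q-p)} )^{1/2}, where the sum on the right-hand side is finite. -/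
open Filter Topology

lemma lam_pos (σ : Finset ℕ) : 0 < lam σ :=
  Finset.prod_pos fun k _ => by positivity

lemma summable_lam_rpow {r : ℝ} (hr : 1 / 2 < r) :
    Summable (fun σ : Finset ℕ => lam σ ^ (-(2 * r))) := by
  set a : ℕ → ℝ := fun k => ((k : ℝ) + 1) ^ (-(2 * r)) with ha
  have ha0 : ∀ k, 0 ≤ a k := fun k => Real.rpow_nonneg (by positivity) _
  have hsa : Summable a := by
    have : Summable (fun n : ℕ => (n : ℝ) ^ (-(2 * r))) :=
      Real.summable_nat_rpow.mpr (by linarith)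
    have := (summable_nat_add_iff 1).mpr this
    simpa [a] using this
  have hlam : ∀ σ : Finset ℕ, lam σ ^ (-(2 * r)) = ∏ k ∈ σ, a k := by
    intro σ
    rw [lam, ← Real.finset_prod_rpow σ _ (fun k _ => by positivity)]
  apply summable_of_sum_le (c := Real.exp (∑' k, a k))
    (fun σ => Finset.prod_nonneg (fun k _ => ha0 k) |>.trans_eq (hlam σ).symm)
  intro u
  set s : Finset ℕ := u.sup id with hs
  have hsub : u ⊆ s.powerset := by
    intro σ hσ
    simpa using Finset.le_sup (f := id) hσ
  calc ∑ σ ∈ u, lam σ ^ (-(2 * r)) ≤ ∑ σ ∈ s.powerset, lam σ ^ (-(2 * r)) :=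
        Finset.sum_le_sum_of_subset_of_nonneg hsub
          (fun σ _ _ => (hlam σ) ▸ Finset.prod_nonneg fun k _ => ha0 k)
    _ = ∑ σ ∈ s.powerset, ∏ k ∈ σ, a k := Finset.sum_congr rfl fun σ _ => hlam σ
    _ = ∏ k ∈ s, (a k + 1) := by
        rw [Finset.prod_add]
        exact Finset.sum_congr rfl fun σ _ => by simp
    _ ≤ ∏ k ∈ s, Real.exp (a k) :=
        Finset.prod_le_prod (fun k _ => by positivity)
          (fun k _ => Real.add_one_le_exp (a k))
    _ = Real.exp (∑ k ∈ s, a k) := (Real.exp_sum s a).symm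
    _ ≤ Real.exp (∑' k, a k) :=
        Real.exp_le_exp.mpr (Summable.sum_le_tsum s (fun k _ => ha0 k) hsa)

/-- Sufficiency part of the characterization theorem: if `|F(σ)| ≤ C·lam σ^p`, then for every
`q > p + 1/2` the family `σ ↦ lam σ^(-2q) |F σ|²` is summable and
`(∑ lam σ^(-2q) |F σ|²)^(1/2) ≤ C (∑ lam σ^(-2(q-p)))^(1/2)`, the right-hand sum being finite. -/
theorem stmt1 (F : Finset ℕ → ℂ) (C p : ℝ) (hC : 0 ≤ C) (hp : 0 ≤ p)
    (hF : ∀ σ : Finset ℕ, ‖F σ‖ ≤ C * lam σ ^ p)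
    (q : ℝ) (hq : p + 1 / 2 < q) :
    Summable (fun σ : Finset ℕ => lam σ ^ (-(2 * q)) * ‖F σ‖ ^ 2) ∧
    Summable (fun σ : Finset ℕ => lam σ ^ (-(2 * (q - p)))) ∧
    (∑' σ : Finset ℕ, lam σ ^ (-(2 * q)) * ‖F σ‖ ^ 2) ^ ((1 : ℝ) / 2)
      ≤ C * (∑' σ : Finset ℕ, lam σ ^ (-(2 * (q - p)))) ^ ((1 : ℝ) / 2) := by
  have hS2 : Summable (fun σ : Finset ℕ => lam σ ^ (-(2 * (q - p)))) :=
    summable_lam_rpow (by linarith)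
  have hpt : ∀ σ : Finset ℕ,
      lam σ ^ (-(2 * q)) * ‖F σ‖ ^ 2 ≤ C ^ 2 * lam σ ^ (-(2 * (q - p))) := by
    intro σ
    have hl := lam_pos σ
    have h1 : ‖F σ‖ ^ 2 ≤ (C * lam σ ^ p) ^ 2 :=
      pow_le_pow_left₀ (norm_nonneg _) (hF σ) 2
    have h2 : (C * lam σ ^ p) ^ 2 = C ^ 2 * lam σ ^ (2 * p) := by
      rw [mul_pow, ← Real.rpow_natCast (lam σ ^ p) 2, ← Real.rpow_mul hl.le]
      ring_nf
    calc lam σ ^ (-(2 * q)) * ‖F σ‖ ^ 2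
        ≤ lam σ ^ (-(2 * q)) * (C ^ 2 * lam σ ^ (2 * p)) := by
          rw [← h2]; exact mul_le_mul_of_nonneg_left h1 (Real.rpow_nonneg hl.le _)
      _ = C ^ 2 * lam σ ^ (-(2 * (q - p))) := by
          rw [show -(2 * (q - p)) = -(2 * q) + 2 * p by ring, Real.rpow_add hl]; ring
  have hS1 : Summable (fun σ : Finset ℕ => lam σ ^ (-(2 * q)) * ‖F σ‖ ^ 2) :=
    Summable.of_nonneg_of_le (fun σ => mul_nonneg (Real.rpow_nonneg (lam_pos σ).le _) (by positivity)) hpt (hS2.mul_left _)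
  refine ⟨hS1, hS2, ?_⟩
  have hT : (∑' σ : Finset ℕ, lam σ ^ (-(2 * q)) * ‖F σ‖ ^ 2)
      ≤ C ^ 2 * ∑' σ : Finset ℕ, lam σ ^ (-(2 * (q - p))) := by
    rw [← tsum_mul_left]
    exact Summable.tsum_le_tsum hpt hS1 (hS2.mul_left _)
  rw [← Real.sqrt_eq_rpow, ← Real.sqrt_eq_rpow]
  calc Real.sqrt (∑' σ : Finset ℕ, lam σ ^ (-(2 * q)) * ‖F σ‖ ^ 2)
      ≤ Real.sqrt (C ^ 2 * ∑' σ : Finset ℕ, lam σ ^ (-(2 * (q - p)))) :=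
        Real.sqrt_le_sqrt hT
    _ = C * Real.sqrt (∑' σ : Finset ℕ, lam σ ^ (-(2 * (q - p)))) := by
        rw [Real.sqrt_mul (by positivity), Real.sqrt_sq hC]
end

section
/- Let F : Γ → ℂ and F_n : Γ → ℂ (n ≥ 1) each satisfy a polynomial growth bound (i.e., for each of them there exist constants C ≥ 0, r ≥ 0 with |·(σ)| ≤ C·λ_σ^r for all σ). Then the following are equivalent: (i) there exists q ≥ 0 such that the families σ ↦ λ_σ^{-2q}|F(σ)|² and σ ↦ λ_σ^{-2q}|F_n(σ)|² (for every n) are summable and ∑_{σ∈Γ} λ_σ^{-2q}|F_n(σ) − F(σ)|² → 0 as n → ∞; (ii) F_n(σ) → F(σ) for every σ ∈ Γ, and there exist constants C ≥ 0 and p ≥ 0 such that |F_n(σ)| ≤ C·λ_σ^p for all n ≥ 1 and all σ ∈ Γ. -/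
open Filter Topology

lemma one_le_lam (σ : Finset ℕ) : 1 ≤ lam σ := by
  unfold lam
  have := Finset.prod_le_prod (f := fun _ : ℕ => (1:ℝ)) (g := fun k : ℕ => (k:ℝ)+1)
    (s := σ) (by intros; norm_num) (by intro k _; simp)
  simpa using this

lemma summable_aux : Summable (fun k : ℕ => ((k:ℝ)+1) ^ (-2 : ℝ)) := by
  have h : Summable (fun n : ℕ => (n:ℝ) ^ (-2 : ℝ)) := Real.summable_nat_rpow.mpr (by norm_num)
  have := h.comp_injective Nat.succ_injective
  refine this.congr fun k => ?_
  simp [Function.comp_def, Nat.succ_eq_add_one]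

lemma summable_lam_neg : Summable (fun σ : Finset ℕ => lam σ ^ (-2 : ℝ)) := by
  set h : ℕ → ℝ := fun k => ((k:ℝ)+1) ^ (-2 : ℝ) with hh
  have hnn : ∀ k, 0 ≤ h k := fun k => Real.rpow_nonneg (by positivity) _
  have hrw : ∀ σ : Finset ℕ, lam σ ^ (-2:ℝ) = ∏ k ∈ σ, h k := by
    intro σ
    rw [lam, ← Real.finset_prod_rpow σ _ (fun k _ => by positivity)]
  have hsum := summable_aux
  set c : ℝ := Real.exp (∑' k, h k) with hc
  refine summable_of_sum_le (c := c) (fun σ => Real.rpow_nonneg (lam_pos σ).le _) ?_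
  intro u
  calc ∑ σ ∈ u, lam σ ^ (-2:ℝ) = ∑ σ ∈ u, ∏ k ∈ σ, h k := by
        exact Finset.sum_congr rfl fun σ _ => hrw σ
    _ ≤ ∑ σ ∈ (u.sup id).powerset, ∏ k ∈ σ, h k := by
        refine Finset.sum_le_sum_of_subset_of_nonneg ?_ (fun σ _ _ => Finset.prod_nonneg fun k _ => hnn k)
        intro σ hσ
        exact Finset.mem_powerset.mpr (Finset.le_sup (f := id) hσ)
    _ = ∏ k ∈ u.sup id, (h k + 1) := by
        rw [Finset.prod_add]
        refine Finset.sum_congr rfl fun t _ => by simp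
    _ ≤ ∏ k ∈ u.sup id, Real.exp (h k) := by
        refine Finset.prod_le_prod (fun k _ => by positivity) (fun k _ => ?_)
        exact Real.add_one_le_exp (h k)
    _ = Real.exp (∑ k ∈ u.sup id, h k) := (Real.exp_sum _ _).symm
    _ ≤ c := Real.exp_le_exp.mpr (Summable.sum_le_tsum _ (fun k _ => hnn k) hsum)

lemma term_le {z : ℂ} {σ : Finset ℕ} {c e q : ℝ} (hc : 0 ≤ c)
    (hz : ‖z‖ ≤ c * lam σ ^ e) (hq : e + 1 ≤ q) :
    lam σ ^ (-(2*q)) * ‖z‖ ^ 2 ≤ c ^ 2 * lam σ ^ (-2:ℝ) := by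
  have hl := lam_pos σ
  have h1 : ‖z‖ ^ 2 ≤ (c * lam σ ^ e) ^ 2 :=
    pow_le_pow_left₀ (norm_nonneg z) hz 2
  calc lam σ ^ (-(2*q)) * ‖z‖ ^ 2
      ≤ lam σ ^ (-(2*q)) * (c * lam σ ^ e) ^ 2 :=
        mul_le_mul_of_nonneg_left h1 (Real.rpow_nonneg hl.le _)
    _ = c ^ 2 * lam σ ^ (-(2*q) + e*2) := by
        rw [mul_pow, ← Real.rpow_natCast (lam σ ^ e) 2, ← Real.rpow_mul hl.le,
          Real.rpow_add hl]
        push_cast; ring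
    _ ≤ c ^ 2 * lam σ ^ (-2:ℝ) := by
        refine mul_le_mul_of_nonneg_left ?_ (by positivity)
        exact Real.rpow_le_rpow_of_exponent_le (one_le_lam σ) (by linarith)

lemma sqrt_rpow_two_mul (σ : Finset ℕ) (q : ℝ) :
    Real.sqrt (lam σ ^ (2*q)) = lam σ ^ q := by
  have hl := lam_pos σ
  have : lam σ ^ (2*q) = (lam σ ^ q) ^ 2 := by
    rw [← Real.rpow_natCast (lam σ ^ q) 2, ← Real.rpow_mul hl.le]
    norm_num [mul_comm]
  rw [this, Real.sqrt_sq (Real.rpow_nonneg hl.le q)]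

set_option maxHeartbeats 1600000 in
/-- Convergence theorem for generalized functional sequences (via Fock transforms):
for `F`, `Fₙ` of polynomial growth, strong convergence (convergence in some norm `‖·‖₋q`)
is equivalent to pointwise convergence of the transforms together with a uniform
polynomial growth bound. -/
theorem stmt3 (F : Finset ℕ → ℂ) (Fn : ℕ → Finset ℕ → ℂ)
    (hF : ∃ C ≥ (0 : ℝ), ∃ r ≥ (0 : ℝ), ∀ σ : Finset ℕ, ‖F σ‖ ≤ C * lam σ ^ r)
    (hFn : ∀ n : ℕ, ∃ C ≥ (0 : ℝ), ∃ r ≥ (0 : ℝ),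
      ∀ σ : Finset ℕ, ‖Fn n σ‖ ≤ C * lam σ ^ r) :
    (∃ q ≥ (0 : ℝ),
        Summable (fun σ : Finset ℕ => lam σ ^ (-(2 * q)) * ‖F σ‖ ^ 2) ∧
        (∀ n : ℕ,
          Summable (fun σ : Finset ℕ => lam σ ^ (-(2 * q)) * ‖Fn n σ‖ ^ 2)) ∧
        Tendsto
          (fun n : ℕ => ∑' σ : Finset ℕ, lam σ ^ (-(2 * q)) * ‖Fn n σ - F σ‖ ^ 2)
          atTop (nhds 0))
      ↔
    ((∀ σ : Finset ℕ, Tendsto (fun n : ℕ => Fn n σ) atTop (nhds (F σ))) ∧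
      ∃ C ≥ (0 : ℝ), ∃ p ≥ (0 : ℝ),
        ∀ (n : ℕ) (σ : Finset ℕ), ‖Fn n σ‖ ≤ C * lam σ ^ p) := by
  obtain ⟨C₀, hC₀, r, hr, hFb⟩ := hF
  constructor
  · rintro ⟨q, hq, hSF, hSFn, hT⟩
    -- summability of the difference terms
    have habs2 : ∀ (n : ℕ) (σ : Finset ℕ), ‖Fn n σ - F σ‖ ^ 2 ≤
        2 * ‖Fn n σ‖ ^ 2 + 2 * ‖F σ‖ ^ 2 := by
      intro n σ
      have h1 : ‖Fn n σ - F σ‖ ≤ ‖Fn n σ‖ + ‖F σ‖ := by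
        simpa using norm_sub_le (Fn n σ) (F σ)
      nlinarith [norm_nonneg (Fn n σ - F σ), norm_nonneg (Fn n σ),
        norm_nonneg (F σ), sq_nonneg (‖Fn n σ‖ - ‖F σ‖)]
    have hSD : ∀ n : ℕ,
        Summable (fun σ : Finset ℕ => lam σ ^ (-(2 * q)) * ‖Fn n σ - F σ‖ ^ 2) := by
      intro n
      refine Summable.of_nonneg_of_le (fun σ => mul_nonneg (Real.rpow_nonneg (lam_pos σ).le _) (pow_nonneg (norm_nonneg _) 2))
        (f := fun σ => 2 * (lam σ ^ (-(2 * q)) * ‖Fn n σ‖ ^ 2) +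
          2 * (lam σ ^ (-(2 * q)) * ‖F σ‖ ^ 2)) (fun σ => ?_)
        (((hSFn n).mul_left 2).add (hSF.mul_left 2))
      have := habs2 n σ
      have hnn : (0:ℝ) ≤ lam σ ^ (-(2 * q)) := Real.rpow_nonneg (lam_pos σ).le _
      beta_reduce
      nlinarith
    set S : ℕ → ℝ := fun n => ∑' σ : Finset ℕ, lam σ ^ (-(2 * q)) * ‖Fn n σ - F σ‖ ^ 2
      with hS
    have hSnn : ∀ n, 0 ≤ S n := fun n => tsum_nonneg (fun σ => mul_nonneg (Real.rpow_nonneg (lam_pos σ).le _) (pow_nonneg (norm_nonneg _) 2))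
    have hle : ∀ n σ, lam σ ^ (-(2 * q)) * ‖Fn n σ - F σ‖ ^ 2 ≤ S n := by
      intro n σ
      exact Summable.le_tsum (hSD n) σ (fun σ' _ => mul_nonneg (Real.rpow_nonneg (lam_pos σ').le _) (pow_nonneg (norm_nonneg _) 2))
    have hdiff : ∀ n σ, ‖Fn n σ - F σ‖ ≤ Real.sqrt (lam σ ^ (2*q) * S n) := by
      intro n σ
      have hl := lam_pos σ
      have h1 : ‖Fn n σ - F σ‖ ^ 2 ≤ lam σ ^ (2*q) * S n := by
        have h2 := hle n σ
        have h3 : lam σ ^ (-(2*q)) * lam σ ^ (2*q) = 1 := by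
          rw [← Real.rpow_add hl]; norm_num
        have h4 : (0:ℝ) < lam σ ^ (-(2*q)) := Real.rpow_pos_of_pos hl _
        have h5 : (0:ℝ) < lam σ ^ (2*q) := Real.rpow_pos_of_pos hl _
        nlinarith
      calc ‖Fn n σ - F σ‖
          = Real.sqrt (‖Fn n σ - F σ‖ ^ 2) :=
            (Real.sqrt_sq (norm_nonneg _)).symm
        _ ≤ Real.sqrt (lam σ ^ (2*q) * S n) := Real.sqrt_le_sqrt h1
    constructor
    · -- pointwise convergence
      intro σ
      rw [tendsto_iff_norm_sub_tendsto_zero]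
      have hb : Tendsto (fun n => Real.sqrt (lam σ ^ (2*q) * S n)) atTop (nhds 0) := by
        have h1 : Tendsto (fun n => lam σ ^ (2*q) * S n) atTop (nhds 0) := by
          simpa using hT.const_mul (lam σ ^ (2*q))
        have := (Real.continuous_sqrt.tendsto 0).comp h1
        simpa [Function.comp_def] using this
      refine squeeze_zero (fun n => norm_nonneg _) (fun n => ?_) hb
      simpa using hdiff n σ
    · -- uniform bound
      obtain ⟨M, hM⟩ := (hT.bddAbove_range).exists_ge 0
      have hM0 : 0 ≤ M := hM.1
      have hMS : ∀ n, S n ≤ M := by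
        intro n
        exact hM.2 (S n) ⟨n, rfl⟩
      refine ⟨C₀ + Real.sqrt M, by positivity, max r q, le_trans hr (le_max_left _ _), ?_⟩
      intro n σ
      have hl := lam_pos σ
      have h1 : ‖Fn n σ‖ ≤ ‖F σ‖ + ‖Fn n σ - F σ‖ := by
        have h0 : Fn n σ = F σ + (Fn n σ - F σ) := by ring
        calc ‖Fn n σ‖ = ‖F σ + (Fn n σ - F σ)‖ := by rw [← h0]
          _ ≤ ‖F σ‖ + ‖Fn n σ - F σ‖ := by
              simpa using norm_add_le (F σ) (Fn n σ - F σ)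
      have h2 : ‖Fn n σ - F σ‖ ≤ Real.sqrt M * lam σ ^ q := by
        calc ‖Fn n σ - F σ‖ ≤ Real.sqrt (lam σ ^ (2*q) * S n) := hdiff n σ
          _ ≤ Real.sqrt (lam σ ^ (2*q) * M) := by
              refine Real.sqrt_le_sqrt ?_
              exact mul_le_mul_of_nonneg_left (hMS n) (Real.rpow_nonneg hl.le _)
          _ = Real.sqrt M * lam σ ^ q := by
              rw [Real.sqrt_mul (Real.rpow_nonneg hl.le _), sqrt_rpow_two_mul, mul_comm]
      have h3 : lam σ ^ q ≤ lam σ ^ (max r q) :=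
        Real.rpow_le_rpow_of_exponent_le (one_le_lam σ) (le_max_right _ _)
      have h4 : lam σ ^ r ≤ lam σ ^ (max r q) :=
        Real.rpow_le_rpow_of_exponent_le (one_le_lam σ) (le_max_left _ _)
      have h5 := hFb σ
      have h6 : (0:ℝ) ≤ Real.sqrt M := Real.sqrt_nonneg M
      have h7 : (0:ℝ) < lam σ ^ q := Real.rpow_pos_of_pos hl _
      nlinarith [Real.rpow_pos_of_pos hl r, Real.rpow_pos_of_pos hl (max r q)]
  · rintro ⟨hpt, C, hC, p, hp, hb⟩
    -- merged bound
    set B : ℝ := C₀ + C with hB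
    set s : ℝ := max r p with hs
    have hB0 : 0 ≤ B := by positivity
    have hs0 : 0 ≤ s := le_trans hr (le_max_left _ _)
    have hFB : ∀ σ, ‖F σ‖ ≤ B * lam σ ^ s := by
      intro σ
      refine (hFb σ).trans ?_
      have := Real.rpow_le_rpow_of_exponent_le (one_le_lam σ) (le_max_left r p)
      have h7 : (0:ℝ) < lam σ ^ r := Real.rpow_pos_of_pos (lam_pos σ) _
      nlinarith
    have hFnB : ∀ n σ, ‖Fn n σ‖ ≤ B * lam σ ^ s := by
      intro n σ
      refine (hb n σ).trans ?_
      have := Real.rpow_le_rpow_of_exponent_le (one_le_lam σ) (le_max_right r p)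
      have h7 : (0:ℝ) < lam σ ^ p := Real.rpow_pos_of_pos (lam_pos σ) _
      nlinarith
    have hDB : ∀ n σ, ‖Fn n σ - F σ‖ ≤ (2*B) * lam σ ^ s := by
      intro n σ
      have h1 : ‖Fn n σ - F σ‖ ≤ ‖Fn n σ‖ + ‖F σ‖ := by
        simpa using norm_sub_le (Fn n σ) (F σ)
      have := hFB σ; have := hFnB n σ
      nlinarith
    refine ⟨s + 1, by linarith, ?_, ?_, ?_⟩
    · refine Summable.of_nonneg_of_le (fun σ => mul_nonneg (Real.rpow_nonneg (lam_pos σ).le _) (pow_nonneg (norm_nonneg _) 2))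
        (f := fun σ => B ^ 2 * lam σ ^ (-2:ℝ)) (fun σ => ?_) (summable_lam_neg.mul_left _)
      exact term_le hB0 (hFB σ) le_rfl
    · intro n
      refine Summable.of_nonneg_of_le (fun σ => mul_nonneg (Real.rpow_nonneg (lam_pos σ).le _) (pow_nonneg (norm_nonneg _) 2))
        (f := fun σ => B ^ 2 * lam σ ^ (-2:ℝ)) (fun σ => ?_) (summable_lam_neg.mul_left _)
      exact term_le hB0 (hFnB n σ) le_rfl
    · have h0 : Tendsto
          (fun n : ℕ => ∑' σ : Finset ℕ,
            lam σ ^ (-(2 * (s+1))) * ‖Fn n σ - F σ‖ ^ 2)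
          atTop (nhds (∑' _ : Finset ℕ, (0:ℝ))) := by
        refine tendsto_tsum_of_dominated_convergence
          (bound := fun σ => (2*B) ^ 2 * lam σ ^ (-2:ℝ))
          (summable_lam_neg.mul_left _) (fun σ => ?_) (Filter.Eventually.of_forall fun n σ => ?_)
        · have h1 : Tendsto (fun n => Fn n σ - F σ) atTop (nhds 0) := by
            simpa using (hpt σ).sub (tendsto_const_nhds (x := F σ))
          have h2 : Tendsto (fun n => ‖Fn n σ - F σ‖) atTop (nhds 0) := by
            simpa using h1.norm
          have h3 : Tendsto (fun n => ‖Fn n σ - F σ‖ ^ 2) atTop (nhds 0) := by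
            simpa using h2.pow 2
          simpa using h3.const_mul (lam σ ^ (-(2 * (s+1))))
        · rw [Real.norm_of_nonneg (mul_nonneg (Real.rpow_nonneg (lam_pos σ).le _) (pow_nonneg (norm_nonneg _) 2))]
          exact term_le (by positivity) (hDB n σ) le_rfl
      simpa using h0
end

section
/- For every finite subset σ of ℕ and every n ∈ ℕ, the conditional expectation of Z_σ given 𝓕_n satisfies: E[Z_σ | 𝓕_n] = Z_σ almost surely if σ ⊆ {0, 1, ..., n}, and E[Z_σ | 𝓕_n] = 0 almost surely otherwise. -/
open Filter Topology MeasureTheory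

/-- Conditional expectation of the products `Z_σ = ∏_{i∈σ} Z_i` of a discrete-time normal noise
given `𝓕_n = σ(Z_0,...,Z_n)`: it equals `Z_σ` a.s. when `σ ⊆ {0,...,n}` and `0` a.s. otherwise. -/
theorem stmt5 {Ω : Type*} {m0 : MeasurableSpace Ω} (μ : Measure Ω) [IsProbabilityMeasure μ]
    (Z : ℕ → Ω → ℝ) (hZmeas : ∀ n, Measurable (Z n))
    (𝓕 : ℕ → MeasurableSpace Ω)
    (h𝓕 : ∀ n, 𝓕 n = ⨆ i ∈ Set.Iic n, MeasurableSpace.comap (Z i)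
      (inferInstance : MeasurableSpace ℝ))
    (h𝓕le : ∀ n, 𝓕 n ≤ m0)
    (hZ0 : ∫ ω, Z 0 ω ∂μ = 0)
    (hZ0sq : ∫ ω, (Z 0 ω) ^ 2 ∂μ = 1)
    (hcond : ∀ n : ℕ, μ[Z (n + 1)|𝓕 n] =ᵐ[μ] fun _ => 0)
    (hcondsq : ∀ n : ℕ, μ[(fun ω => (Z (n + 1) ω) ^ 2)|𝓕 n] =ᵐ[μ] fun _ => 1)
    (hsq : ∀ σ : Finset ℕ, MemLp (fun ω => ∏ i ∈ σ, Z i ω) 2 μ) :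
    ∀ (σ : Finset ℕ) (n : ℕ),
      (σ ⊆ Finset.range (n + 1) →
        μ[(fun ω => ∏ i ∈ σ, Z i ω)|𝓕 n] =ᵐ[μ] fun ω => ∏ i ∈ σ, Z i ω) ∧
      (¬ σ ⊆ Finset.range (n + 1) →
        μ[(fun ω => ∏ i ∈ σ, Z i ω)|𝓕 n] =ᵐ[μ] fun _ => 0) := by
  -- measurability of Z i w.r.t. 𝓕 n for i ≤ n
  have hZF : ∀ n i, i ≤ n → Measurable[𝓕 n] (Z i) := by
    intro n i hi
    rw [h𝓕 n]
    exact measurable_iff_comap_le.2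
      (le_iSup₂ (f := fun i (_ : i ∈ Set.Iic n) =>
        MeasurableSpace.comap (Z i) (inferInstance : MeasurableSpace ℝ)) i hi)
  have hmono : ∀ {a b : ℕ}, a ≤ b → 𝓕 a ≤ 𝓕 b := by
    intro a b hab
    rw [h𝓕 a, h𝓕 b]
    exact biSup_mono (Set.Iic_subset_Iic.2 hab)
  have hprodmeas : ∀ (n : ℕ) (σ : Finset ℕ), σ ⊆ Finset.range (n + 1) →
      StronglyMeasurable[𝓕 n] (fun ω => ∏ i ∈ σ, Z i ω) := by
    intro n σ hσ
    refine Measurable.stronglyMeasurable ?_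
    exact Finset.measurable_prod σ fun i hi =>
      hZF n i (Nat.lt_succ_iff.1 (Finset.mem_range.1 (hσ hi)))
  have hint : ∀ σ : Finset ℕ, Integrable (fun ω => ∏ i ∈ σ, Z i ω) μ :=
    fun σ => (hsq σ).integrable one_le_two
  intro σ n
  constructor
  · intro hsub
    rw [condExp_of_stronglyMeasurable (h𝓕le n) (hprodmeas n σ hsub) (hint σ)]
  · intro hnsub
    have hσne : σ.Nonempty := by
      rcases σ.eq_empty_or_nonempty with rfl | h
      · exact absurd (Finset.empty_subset _) hnsub
      · exact h
    set m := σ.max' hσne with hm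
    have hmem : m ∈ σ := σ.max'_mem hσne
    have hnm : n < m := by
      by_contra h
      push_neg at h
      exact hnsub fun i hi => Finset.mem_range.2
        (Nat.lt_succ_of_le ((σ.le_max' i hi).trans h))
    have hm1 : m - 1 + 1 = m := by omega
    have hnm1 : n ≤ m - 1 := Nat.le_sub_one_of_lt hnm
    -- split the product
    have hsplit : (fun ω => ∏ i ∈ σ, Z i ω)
        = (fun ω => ∏ i ∈ σ.erase m, Z i ω) * Z m := by
      funext ω
      simp only [Pi.mul_apply]
      rw [mul_comm, ← Finset.mul_prod_erase σ (fun i => Z i ω) hmem]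
    have herase : σ.erase m ⊆ Finset.range (m - 1 + 1) := by
      intro i hi
      rw [hm1, Finset.mem_range]
      exact lt_of_le_of_ne (σ.le_max' i (Finset.mem_of_mem_erase hi))
        (Finset.ne_of_mem_erase hi)
    have hstep : μ[(fun ω => ∏ i ∈ σ, Z i ω)|𝓕 (m - 1)] =ᵐ[μ] fun _ => 0 := by
      have hmul := condExp_mul_of_stronglyMeasurable_left (m := 𝓕 (m - 1)) (μ := μ)
        (hprodmeas (m - 1) (σ.erase m) herase)
        (hsplit ▸ hint σ)
        ((hsq {m}).integrable one_le_two |>.congr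
          (Eventually.of_forall fun ω => by simp))
      rw [hsplit]
      refine hmul.trans ?_
      have hc : μ[Z m|𝓕 (m - 1)] =ᵐ[μ] fun _ => 0 := by
        have := hcond (m - 1)
        rwa [hm1] at this
      filter_upwards [hc] with ω hω
      simp [hω]
    have htower := condExp_condExp_of_le (μ := μ) (hmono hnm1) (h𝓕le (m - 1))
      (f := fun ω => ∏ i ∈ σ, Z i ω)
    refine htower.symm.trans ?_
    calc μ[μ[(fun ω => ∏ i ∈ σ, Z i ω)|𝓕 (m-1)]|𝓕 n]
        =ᵐ[μ] μ[(fun _ => (0:ℝ))|𝓕 n] := condExp_congr_ae hstep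
      _ =ᵐ[μ] fun _ => 0 := by
        rw [show (fun _ : Ω => (0:ℝ)) = (0 : Ω → ℝ) from rfl, condExp_zero]
end

section
/- Let (ξ_n)_{n≥0} be a martingale with respect to the filtration 𝓕 = (𝓕_n)_{n≥0} with each ξ_n square-integrable. Then for every n ∈ ℕ and every finite subset σ of ℕ: E[Z_σ · ξ_n] = E[Z_σ · ξ_{n+1}] if σ ⊆ {0, 1, ..., n}, and E[Z_σ · ξ_n] = 0 otherwise. (In other words, the Fock transforms ξ̂_n(σ) = ⟨Z_σ, ξ_n⟩ satisfy ξ̂_n(σ) = 𝟏_{n]}(σ)·ξ̂_{n+1}(σ), so every classical square-integrable 𝓕-martingale is an M-generalized martingale.) -/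
open Filter Topology MeasureTheory ENNReal

/-- Every classical square-integrable martingale `(ξ_n)` with respect to the filtration
`𝓕_n = σ(Z_0,...,Z_n)` generated by a discrete-time normal noise `Z` is an `M`-generalized
martingale: its Fock transforms satisfy `⟨Z_σ, ξ_n⟩ = 𝟏_{n]}(σ)·⟨Z_σ, ξ_{n+1}⟩`, i.e.,
`E[Z_σ ξ_n] = E[Z_σ ξ_{n+1}]` when `σ ⊆ {0,...,n}` and `E[Z_σ ξ_n] = 0` otherwise. -/
theorem stmt6 {Ω : Type*} {m0 : MeasurableSpace Ω} (μ : Measure Ω) [IsProbabilityMeasure μ]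
    (Z : ℕ → Ω → ℝ) (hZmeas : ∀ n, Measurable (Z n))
    (𝓕 : ℕ → MeasurableSpace Ω)
    (h𝓕 : ∀ n, 𝓕 n = ⨆ i ∈ Set.Iic n, MeasurableSpace.comap (Z i)
      (inferInstance : MeasurableSpace ℝ))
    (h𝓕le : ∀ n, 𝓕 n ≤ m0)
    (hZ0 : ∫ ω, Z 0 ω ∂μ = 0)
    (hZ0sq : ∫ ω, (Z 0 ω) ^ 2 ∂μ = 1)
    (hcond : ∀ n : ℕ, μ[Z (n + 1)|𝓕 n] =ᵐ[μ] fun _ => 0)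
    (hcondsq : ∀ n : ℕ, μ[(fun ω => (Z (n + 1) ω) ^ 2)|𝓕 n] =ᵐ[μ] fun _ => 1)
    (hsq : ∀ σ : Finset ℕ, MemLp (fun ω => ∏ i ∈ σ, Z i ω) 2 μ)
    (ξ : ℕ → Ω → ℝ)
    (hadapted : ∀ n, StronglyMeasurable[𝓕 n] (ξ n))
    (hξsq : ∀ n, MemLp (ξ n) 2 μ)
    (hmart : ∀ n : ℕ, μ[ξ (n + 1)|𝓕 n] =ᵐ[μ] ξ n) :
    ∀ (n : ℕ) (σ : Finset ℕ),
      (σ ⊆ Finset.range (n + 1) →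
        ∫ ω, (∏ i ∈ σ, Z i ω) * ξ n ω ∂μ = ∫ ω, (∏ i ∈ σ, Z i ω) * ξ (n + 1) ω ∂μ) ∧
      (¬ σ ⊆ Finset.range (n + 1) →
        ∫ ω, (∏ i ∈ σ, Z i ω) * ξ n ω ∂μ = 0) := by
  -- integrability of products of two L² functions
  have hint : ∀ (f g : Ω → ℝ), MemLp f 2 μ → MemLp g 2 μ →
      Integrable (fun ω => f ω * g ω) μ := by
    intro f g hf hg
    rw [← memLp_one_iff_integrable]
    have h12 : (1 : ℝ≥0∞) / 1 = 1 / 2 + 1 / 2 := by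
      simp only [one_div, inv_one]; exact ENNReal.inv_two_add_inv_two.symm
    haveI : ENNReal.HolderTriple 2 2 1 := ⟨by simpa [one_div] using h12.symm⟩
    exact hg.smul hf (r := 1)
  -- measurability of Z_σ wrt 𝓕 n when σ ⊆ {0,...,n}
  have hZσmeas : ∀ (n : ℕ) (σ : Finset ℕ), (∀ i ∈ σ, i ≤ n) →
      StronglyMeasurable[𝓕 n] (fun ω => ∏ i ∈ σ, Z i ω) := by
    intro n σ hσ
    apply Measurable.stronglyMeasurable
    apply Finset.measurable_prod
    intro i hi
    have hle : MeasurableSpace.comap (Z i) (inferInstance : MeasurableSpace ℝ) ≤ 𝓕 n := by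
      rw [h𝓕 n]
      exact le_iSup₂ (f := fun i (_ : i ∈ Set.Iic n) => MeasurableSpace.comap (Z i) (inferInstance : MeasurableSpace ℝ)) i (hσ i hi)
    exact measurable_iff_comap_le.mpr hle
  -- monotonicity of the filtration
  have hmono : ∀ a b : ℕ, a ≤ b → 𝓕 a ≤ 𝓕 b := by
    intro a b hab
    rw [h𝓕 a, h𝓕 b]
    exact biSup_mono fun i (hi : i ∈ Set.Iic a) => le_trans hi hab
  intro n σ
  constructor
  · -- σ ⊆ {0,...,n}
    intro hσ
    have hZm : StronglyMeasurable[𝓕 n] (fun ω => ∏ i ∈ σ, Z i ω) :=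
      hZσmeas n σ fun i hi => Nat.lt_succ_iff.mp (Finset.mem_range.mp (hσ hi))
    have hfg : Integrable ((fun ω => ∏ i ∈ σ, Z i ω) * ξ (n + 1)) μ :=
      hint _ _ (hsq σ) (hξsq (n + 1))
    have hg : Integrable (ξ (n + 1)) μ := (hξsq (n + 1)).integrable one_le_two
    have hpull := condExp_mul_of_stronglyMeasurable_left (μ := μ) hZm hfg hg
    calc ∫ ω, (∏ i ∈ σ, Z i ω) * ξ n ω ∂μ
        = ∫ ω, ((fun ω => ∏ i ∈ σ, Z i ω) * μ[ξ (n + 1)|𝓕 n]) ω ∂μ := by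
          refine integral_congr_ae ?_
          filter_upwards [hmart n] with ω hω
          simp [hω]
      _ = ∫ ω, (μ[(fun ω => ∏ i ∈ σ, Z i ω) * ξ (n + 1)|𝓕 n]) ω ∂μ :=
          (integral_congr_ae hpull).symm
      _ = ∫ ω, (∏ i ∈ σ, Z i ω) * ξ (n + 1) ω ∂μ := integral_condExp (h𝓕le n)
  · -- σ ⊄ {0,...,n}
    intro hσ
    obtain ⟨k, hkσ, hk⟩ := Finset.not_subset.mp hσ
    have hne : σ.Nonempty := ⟨k, hkσ⟩
    set m := σ.max' hne with hmdef
    have hmσ : m ∈ σ := σ.max'_mem hne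
    have hkm : k ≤ m := σ.le_max' k hkσ
    have hnk : n + 1 ≤ k := by simpa using Finset.mem_range.not.mp hk
    have hnm : n + 1 ≤ m := hnk.trans hkm
    set p := m - 1 with hpdef
    have hmp : m = p + 1 := (Nat.succ_pred_eq_of_pos (by omega)).symm
    have hnp : n ≤ p := by omega
    -- f = Z_{σ \ {m}} · ξ_n is 𝓕 p-measurable
    set f : Ω → ℝ := fun ω => (∏ i ∈ σ.erase m, Z i ω) * ξ n ω with hfdef
    have hfmeas : StronglyMeasurable[𝓕 p] f := by
      refine StronglyMeasurable.mul ?_ ((hadapted n).mono (hmono n p hnp))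
      refine hZσmeas p (σ.erase m) fun i hi => ?_
      have hiσ := Finset.mem_of_mem_erase hi
      have : i ≠ m := Finset.ne_of_mem_erase hi
      have := σ.le_max' i hiσ
      omega
    have hfg : Integrable (f * Z m) μ := by
      refine (hint _ _ (hsq σ) (hξsq n)).congr ?_
      refine Eventually.of_forall fun ω => ?_
      simp only [hfdef, Pi.mul_apply]
      rw [← Finset.mul_prod_erase σ (fun i => Z i ω) hmσ]
      ring
    have hg : Integrable (Z m) μ := by
      have := (hsq {m}).integrable one_le_two
      simpa using this
    have hpull := condExp_mul_of_stronglyMeasurable_left (μ := μ) hfmeas hfg hg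
    have hZc : μ[Z m|𝓕 p] =ᵐ[μ] fun _ => 0 := by
      rw [hmp]; exact hcond p
    calc ∫ ω, (∏ i ∈ σ, Z i ω) * ξ n ω ∂μ
        = ∫ ω, (f * Z m) ω ∂μ := by
          refine integral_congr_ae (Eventually.of_forall fun ω => ?_)
          simp only [hfdef, Pi.mul_apply]
          rw [← Finset.mul_prod_erase σ (fun i => Z i ω) hmσ]
          ring
      _ = ∫ ω, (μ[f * Z m|𝓕 p]) ω ∂μ := (integral_condExp (h𝓕le p)).symm
      _ = 0 := by
          rw [integral_congr_ae (hpull.trans ?_), integral_zero]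
          filter_upwards [hZc] with ω hω
          simp [hω]
end

section
/- Let (F_n)_{n≥1} be a sequence of functions Γ → ℂ, each satisfying a polynomial growth bound (for each n there exist C ≥ 0, r ≥ 0 with |F_n(σ)| ≤ C·λ_σ^r for all σ), and satisfying the generalized-martingale relation F_n(σ) = 𝟏_{n]}(σ)·F_{n+1}(σ) for all σ ∈ Γ and n. Then the following are equivalent: (1) there exist F : Γ → ℂ and q ≥ 0 such that σ ↦ λ_σ^{-2q}|F(σ)|² and σ ↦ λ_σ^{-2q}|F_n(σ)|² are summable for every n, and ∑_{σ∈Γ} λ_σ^{-2q}|F_n(σ) − F(σ)|² → 0 as n → ∞; (2) there exist constants C ≥ 0 and p ≥ 0 such that |F_n(σ)| ≤ C·λ_σ^p for all n ≥ 1 and all σ ∈ Γ. -/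
open Filter Topology

lemma term_nonneg (σ : Finset ℕ) (e : ℝ) (x : ℂ) : 0 ≤ lam σ ^ e * ‖x‖ ^ 2 :=
  mul_nonneg (Real.rpow_pos_of_pos (lam_pos σ) e).le (by positivity)

lemma summable_inv_sq : Summable (fun σ : Finset ℕ => (lam σ ^ 2)⁻¹) := by
  have hg : Summable (fun k : ℕ => (((k:ℝ)+1)^2)⁻¹) := by
    have := (Real.summable_one_div_nat_pow (p := 2)).2 (by norm_num)
    have h2 := (summable_nat_add_iff 1).2 this
    simpa [one_div] using h2
  set c := Real.exp (∑' k : ℕ, (((k:ℝ)+1)^2)⁻¹) with hc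
  apply summable_of_sum_le (c := c)
  · intro σ
    have := lam_pos σ
    positivity
  · intro u
    set N := u.sup (fun σ => σ.sup id) + 1 with hN
    have hsub : u ⊆ (Finset.range N).powerset := by
      intro σ hσ
      refine Finset.mem_powerset.2 (fun k hk => Finset.mem_range.2 ?_)
      have h1 : k ≤ σ.sup id := Finset.le_sup (f := id) hk
      have h2 : σ.sup id ≤ u.sup (fun σ => σ.sup id) := Finset.le_sup (f := fun σ => σ.sup id) hσ
      omega
    calc ∑ σ ∈ u, (lam σ ^ 2)⁻¹
        ≤ ∑ σ ∈ (Finset.range N).powerset, (lam σ ^ 2)⁻¹ := by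
          apply Finset.sum_le_sum_of_subset_of_nonneg hsub
          intro σ _ _
          have := lam_pos σ
          positivity
      _ = ∑ σ ∈ (Finset.range N).powerset,
            (∏ k ∈ σ, (((k:ℝ)+1)^2)⁻¹) * ∏ k ∈ (Finset.range N) \ σ, (1:ℝ) := by
          refine Finset.sum_congr rfl fun σ _ => ?_
          rw [Finset.prod_const_one, mul_one, Finset.prod_inv_distrib, lam, Finset.prod_pow]
      _ = ∏ k ∈ Finset.range N, ((((k:ℝ)+1)^2)⁻¹ + 1) := (Finset.prod_add _ _ _).symm
      _ ≤ ∏ k ∈ Finset.range N, Real.exp ((((k:ℝ)+1)^2)⁻¹) := by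
          apply Finset.prod_le_prod
          · intro k _; positivity
          · intro k _; exact Real.add_one_le_exp _
      _ = Real.exp (∑ k ∈ Finset.range N, (((k:ℝ)+1)^2)⁻¹) := (Real.exp_sum _ _).symm
      _ ≤ c := Real.exp_le_exp.2 (Summable.sum_le_tsum _ (fun k _ => by positivity) hg)

lemma chain (F : ℕ → Finset ℕ → ℂ)
    (hmart : ∀ (n : ℕ) (σ : Finset ℕ),
      F n σ = (if σ ⊆ Finset.range (n + 1) then (1 : ℂ) else 0) * F (n + 1) σ)
    {n m : ℕ} (h : n ≤ m) {σ : Finset ℕ} (hσ : σ ⊆ Finset.range (n+1)) :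
    F n σ = F m σ := by
  induction m, h using Nat.le_induction with
  | base => rfl
  | succ m hm ih =>
    rw [ih, hmart m σ, if_pos (hσ.trans (Finset.range_subset_range.2 (by omega))), one_mul]

lemma Fform (F : ℕ → Finset ℕ → ℂ)
    (hmart : ∀ (n : ℕ) (σ : Finset ℕ),
      F n σ = (if σ ⊆ Finset.range (n + 1) then (1 : ℂ) else 0) * F (n + 1) σ)
    (n : ℕ) (σ : Finset ℕ) :
    F n σ = if σ ⊆ Finset.range (n+1) then F (σ.sup id) σ else 0 := by
  by_cases h : σ ⊆ Finset.range (n+1)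
  · rw [if_pos h]
    have hsup : σ.sup id ≤ n := Finset.sup_le fun k hk => Nat.lt_succ_iff.1 (Finset.mem_range.1 (h hk))
    have hσ : σ ⊆ Finset.range (σ.sup id + 1) :=
      fun k hk => Finset.mem_range.2 (Nat.lt_succ_of_le (Finset.le_sup (f := id) hk))
    exact (chain F hmart hsup hσ).symm
  · rw [if_neg h, hmart n σ, if_neg h, zero_mul]

/-- For an `M`-generalized martingale `(F_n)` (via Fock transforms: each `F_n` of polynomial
growth and `F_n(σ) = 𝟏_{n]}(σ)·F_{n+1}(σ)`), strong convergence in `S^*(M)` is equivalent to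
a uniform polynomial growth bound `|F_n(σ)| ≤ C·lam σ^p`. -/
theorem stmt8 (F : ℕ → Finset ℕ → ℂ)
    (hgrow : ∀ n : ℕ, ∃ C ≥ (0 : ℝ), ∃ r ≥ (0 : ℝ),
      ∀ σ : Finset ℕ, ‖F n σ‖ ≤ C * lam σ ^ r)
    (hmart : ∀ (n : ℕ) (σ : Finset ℕ),
      F n σ = (if σ ⊆ Finset.range (n + 1) then (1 : ℂ) else 0) * F (n + 1) σ) :
    (∃ G : Finset ℕ → ℂ, ∃ q ≥ (0 : ℝ),
        Summable (fun σ : Finset ℕ => lam σ ^ (-(2 * q)) * ‖G σ‖ ^ 2) ∧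
        (∀ n : ℕ,
          Summable (fun σ : Finset ℕ => lam σ ^ (-(2 * q)) * ‖F n σ‖ ^ 2)) ∧
        Tendsto
          (fun n : ℕ => ∑' σ : Finset ℕ, lam σ ^ (-(2 * q)) * ‖F n σ - G σ‖ ^ 2)
          atTop (nhds 0))
      ↔
    (∃ C ≥ (0 : ℝ), ∃ p ≥ (0 : ℝ),
      ∀ (n : ℕ) (σ : Finset ℕ), ‖F n σ‖ ≤ C * lam σ ^ p) := by
  constructor
  · rintro ⟨G, q, hq, hG, hFn, htend⟩
    obtain ⟨B, hB⟩ := htend.bddAbove_range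
    have hBub : ∀ m : ℕ, (∑' σ : Finset ℕ, lam σ ^ (-(2 * q)) * ‖F m σ - G σ‖ ^ 2) ≤ B :=
      fun m => hB ⟨m, rfl⟩
    have hdiff : ∀ m : ℕ, Summable (fun σ : Finset ℕ =>
        lam σ ^ (-(2 * q)) * ‖F m σ - G σ‖ ^ 2) := by
      intro m
      apply Summable.of_nonneg_of_le (fun σ => term_nonneg σ _ _) (fun σ => ?_)
        (((hFn m).mul_left 2).add (hG.mul_left 2))
      have h1 : ‖F m σ - G σ‖ ^ 2 ≤
          2 * ‖F m σ‖ ^ 2 + 2 * ‖G σ‖ ^ 2 := by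
        have ht : ‖F m σ - G σ‖ ≤ ‖F m σ‖ + ‖G σ‖ := by
          simpa [sub_eq_add_neg, norm_neg] using norm_add_le (F m σ) (-G σ)
        nlinarith [norm_nonneg (F m σ - G σ), norm_nonneg (F m σ),
          norm_nonneg (G σ), sq_nonneg (‖F m σ‖ - ‖G σ‖)]
      have hl : (0:ℝ) ≤ lam σ ^ (-(2 * q)) := (Real.rpow_pos_of_pos (lam_pos σ) _).le
      calc lam σ ^ (-(2 * q)) * ‖F m σ - G σ‖ ^ 2
          ≤ lam σ ^ (-(2 * q)) * (2 * ‖F m σ‖ ^ 2 + 2 * ‖G σ‖ ^ 2) :=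
            mul_le_mul_of_nonneg_left h1 hl
        _ = 2 * (lam σ ^ (-(2 * q)) * ‖F m σ‖ ^ 2) +
            2 * (lam σ ^ (-(2 * q)) * ‖G σ‖ ^ 2) := by ring
    set TG := ∑' σ : Finset ℕ, lam σ ^ (-(2 * q)) * ‖G σ‖ ^ 2 with hTGdef
    have hTG0 : 0 ≤ TG := tsum_nonneg fun σ => term_nonneg σ _ _
    have hB0 : 0 ≤ B := le_trans (tsum_nonneg fun σ => term_nonneg σ _ _) (hBub 0)
    refine ⟨Real.sqrt (2 * B + 2 * TG), Real.sqrt_nonneg _, q, hq, fun n σ => ?_⟩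
    by_cases h : σ ⊆ Finset.range (n + 1)
    · set m := σ.sup id with hm
      have hFe : F n σ = F m σ := by rw [Fform F hmart n σ, if_pos h]
      have hL : (0:ℝ) < lam σ ^ (2 * q) := Real.rpow_pos_of_pos (lam_pos σ) _
      have hinv : lam σ ^ (-(2 * q)) = (lam σ ^ (2 * q))⁻¹ := Real.rpow_neg (lam_pos σ).le _
      have h1 : lam σ ^ (-(2 * q)) * ‖F m σ - G σ‖ ^ 2 ≤ B :=
        le_trans (Summable.le_tsum (hdiff m) σ (fun j _ => term_nonneg j _ _)) (hBub m)
      have h2 : lam σ ^ (-(2 * q)) * ‖G σ‖ ^ 2 ≤ TG :=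
        Summable.le_tsum hG σ (fun j _ => term_nonneg j _ _)
      rw [hinv, inv_mul_le_iff₀ hL] at h1 h2
      have habs : ‖F m σ‖ ≤ ‖F m σ - G σ‖ + ‖G σ‖ := by
        have := norm_add_le (F m σ - G σ) (G σ)
        simpa using this
      have hsq : ‖F m σ‖ ^ 2 ≤ (2 * B + 2 * TG) * lam σ ^ (2 * q) := by
        nlinarith [norm_nonneg (F m σ), norm_nonneg (F m σ - G σ),
          norm_nonneg (G σ), sq_nonneg (‖F m σ - G σ‖ - ‖G σ‖)]
      have hsq2 : lam σ ^ (2 * q) = (lam σ ^ q) ^ 2 := by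
        rw [← Real.rpow_natCast (lam σ ^ q) 2, ← Real.rpow_mul (lam_pos σ).le]
        norm_num [mul_comm]
      calc ‖F n σ‖ = Real.sqrt (‖F m σ‖ ^ 2) := by
            rw [hFe, Real.sqrt_sq (norm_nonneg _)]
        _ ≤ Real.sqrt ((2 * B + 2 * TG) * lam σ ^ (2 * q)) := Real.sqrt_le_sqrt hsq
        _ = Real.sqrt (2 * B + 2 * TG) * lam σ ^ q := by
            rw [Real.sqrt_mul (by positivity), hsq2,
              Real.sqrt_sq (Real.rpow_pos_of_pos (lam_pos σ) q).le]
    · rw [Fform F hmart n σ, if_neg h]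
      simp only [norm_zero]
      exact mul_nonneg (Real.sqrt_nonneg _) (Real.rpow_pos_of_pos (lam_pos σ) q).le
  · rintro ⟨C, hC, p, hp, hbd⟩
    set G : Finset ℕ → ℂ := fun σ => F (σ.sup id) σ with hGdef
    have hFG : ∀ (n : ℕ) (σ : Finset ℕ),
        F n σ = if σ ⊆ Finset.range (n + 1) then G σ else 0 := fun n σ => Fform F hmart n σ
    set q : ℝ := p + 1 with hqdef
    have hq0 : (0:ℝ) ≤ q := by simp [hqdef]; linarith
    have key : ∀ σ : Finset ℕ,
        lam σ ^ (-(2 * q)) * (C * lam σ ^ p) ^ 2 = C ^ 2 * (lam σ ^ 2)⁻¹ := by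
      intro σ
      have h0 := lam_pos σ
      have h1 : (C * lam σ ^ p) ^ 2 = C ^ 2 * lam σ ^ (p * 2) := by
        rw [mul_pow, ← Real.rpow_natCast (lam σ ^ p) 2, ← Real.rpow_mul h0.le]
        norm_num
      rw [h1, mul_comm (lam σ ^ (-(2 * q))), mul_assoc, mul_comm (lam σ ^ (p * 2)),
        ← Real.rpow_add h0]
      have h2 : -(2 * q) + p * 2 = (-2 : ℝ) := by rw [hqdef]; ring
      rw [h2, show ((-2:ℝ)) = -((2:ℕ):ℝ) by norm_num, Real.rpow_neg h0.le, Real.rpow_natCast]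
    have hterm : ∀ (x : ℂ) (σ : Finset ℕ), ‖x‖ ≤ C * lam σ ^ p →
        lam σ ^ (-(2 * q)) * ‖x‖ ^ 2 ≤ C ^ 2 * (lam σ ^ 2)⁻¹ := by
      intro x σ hx
      have hl : (0:ℝ) ≤ lam σ ^ (-(2 * q)) := (Real.rpow_pos_of_pos (lam_pos σ) _).le
      calc lam σ ^ (-(2 * q)) * ‖x‖ ^ 2
          ≤ lam σ ^ (-(2 * q)) * (C * lam σ ^ p) ^ 2 :=
            mul_le_mul_of_nonneg_left (pow_le_pow_left₀ (norm_nonneg x) hx 2) hl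
        _ = C ^ 2 * (lam σ ^ 2)⁻¹ := key σ
    have hsumG : Summable (fun σ : Finset ℕ => lam σ ^ (-(2 * q)) * ‖G σ‖ ^ 2) :=
      Summable.of_nonneg_of_le (fun σ => term_nonneg σ _ _)
        (fun σ => hterm _ σ (hbd _ σ)) (summable_inv_sq.mul_left (C ^ 2))
    have hsumF : ∀ n : ℕ,
        Summable (fun σ : Finset ℕ => lam σ ^ (-(2 * q)) * ‖F n σ‖ ^ 2) := fun n =>
      Summable.of_nonneg_of_le (fun σ => term_nonneg σ _ _)
        (fun σ => hterm _ σ (hbd n σ)) (summable_inv_sq.mul_left (C ^ 2))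
    refine ⟨G, q, hq0, hsumG, hsumF, ?_⟩
    have hmap : Tendsto (fun n : ℕ => (Finset.range (n + 1)).powerset) atTop atTop := by
      apply Filter.tendsto_atTop_atTop_of_monotone
      · intro a b hab
        exact Finset.powerset_mono.2 (Finset.range_subset_range.2 (by omega))
      · intro s
        refine ⟨s.sup (fun σ => σ.sup id), Finset.le_iff_subset.2 fun σ hσ => ?_⟩
        refine Finset.mem_powerset.2 fun k hk => Finset.mem_range.2 ?_
        have h1 : k ≤ σ.sup id := Finset.le_sup (f := id) hk
        have h2 : σ.sup id ≤ s.sup (fun σ => σ.sup id) := Finset.le_sup (f := fun σ => σ.sup id) hσ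
        omega
    have htail := (tendsto_tsum_compl_atTop_zero
      (fun σ : Finset ℕ => lam σ ^ (-(2 * q)) * ‖G σ‖ ^ 2)).comp hmap
    refine htail.congr fun n => ?_
    have := tsum_subtype {x : Finset ℕ | x ∉ (Finset.range (n + 1)).powerset}
      (fun σ : Finset ℕ => lam σ ^ (-(2 * q)) * ‖G σ‖ ^ 2)
    rw [Function.comp_apply]
    rw [show (∑' (a : {x : Finset ℕ // x ∉ (Finset.range (n + 1)).powerset}),
        lam (a : Finset ℕ) ^ (-(2 * q)) * ‖G a‖ ^ 2) =
        ∑' (σ : Finset ℕ), Set.indicator {x : Finset ℕ | x ∉ (Finset.range (n + 1)).powerset}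
          (fun σ : Finset ℕ => lam σ ^ (-(2 * q)) * ‖G σ‖ ^ 2) σ from this]
    refine tsum_congr fun σ => ?_
    by_cases h : σ ⊆ Finset.range (n + 1)
    · have hmem : σ ∉ {x : Finset ℕ | x ∉ (Finset.range (n + 1)).powerset} := by
        simp [Finset.mem_powerset, h]
      rw [Set.indicator_of_notMem hmem, hFG n σ, if_pos h]
      simp
    · have hmem : σ ∈ {x : Finset ℕ | x ∉ (Finset.range (n + 1)).powerset} := by
        simp [Finset.mem_powerset, h]
      rw [Set.indicator_of_mem hmem, hFG n σ, if_neg h]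
      simp
end

section
/- Let (F_n)_{n≥1} be a sequence of functions Γ → ℂ, each satisfying a polynomial growth bound, and satisfying the generalized-martingale relation F_n(σ) = 𝟏_{n]}(σ)·F_{n+1}(σ) for all σ ∈ Γ and n. Then (F_n) converges in the norm ‖·‖_{-q} for some q ≥ 0 (i.e., there exist F and q ≥ 0 with all ‖F_n‖_{-q}, ‖F‖_{-q} < ∞ and ‖F_n − F‖_{-q} → 0) if and only if (F_n) is norm-bounded in ‖·‖_{-p} for some p ≥ 0 (i.e., there exists p ≥ 0 with sup_n ∑_{σ∈Γ} λ_σ^{-2p}|F_n(σ)|² < ∞). (Thus for an M-generalized martingale, strong convergence in S^*(M) is equivalent to strong boundedness.) -/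
open Filter Topology

lemma self_sub_range (σ : Finset ℕ) : σ ⊆ Finset.range (σ.sup id + 1) := by
  intro k hk
  exact Finset.mem_range.mpr (Nat.lt_succ_of_le (Finset.le_sup (f := id) hk))

lemma mart_step (F : ℕ → Finset ℕ → ℂ)
    (hmart : ∀ (n : ℕ) (σ : Finset ℕ),
      F n σ = (if σ ⊆ Finset.range (n + 1) then (1 : ℂ) else 0) * F (n + 1) σ)
    (σ : Finset ℕ) (n m : ℕ) (hnm : n ≤ m) (hsub : σ ⊆ Finset.range (n + 1)) :
    F n σ = F m σ := by
  induction m, hnm using Nat.le_induction with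
  | base => rfl
  | succ m hm ih =>
    rw [ih, hmart m σ, if_pos (hsub.trans (Finset.range_subset_range.mpr (by omega))), one_mul]

lemma F_eq (F : ℕ → Finset ℕ → ℂ)
    (hmart : ∀ (n : ℕ) (σ : Finset ℕ),
      F n σ = (if σ ⊆ Finset.range (n + 1) then (1 : ℂ) else 0) * F (n + 1) σ)
    (n : ℕ) (σ : Finset ℕ) :
    F n σ = if σ ⊆ Finset.range (n + 1) then F (σ.sup id) σ else 0 := by
  split_ifs with h
  · have h1 := mart_step F hmart σ n (max n (σ.sup id)) (le_max_left _ _) h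
    have h2 := mart_step F hmart σ (σ.sup id) (max n (σ.sup id)) (le_max_right _ _)
      (self_sub_range σ)
    rw [h1, h2]
  · rw [hmart n σ, if_neg h, zero_mul]

lemma sq_abs_le_two (x y : ℂ) :
    ‖x‖ ^ 2 ≤ 2 * ‖x - y‖ ^ 2 + 2 * ‖y‖ ^ 2 := by
  have htri : ‖x‖ ≤ ‖x - y‖ + ‖y‖ := by
    simpa [sub_add_cancel] using norm_add_le (x - y) y
  nlinarith [norm_nonneg x, norm_nonneg (x - y), norm_nonneg y,
    sq_nonneg (‖x - y‖ - ‖y‖)]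

/-- For an `M`-generalized martingale `(F_n)` (via Fock transforms), strong convergence in
`S^*(M)` (convergence in some norm `‖·‖₋q`) is equivalent to strong boundedness
(norm-boundedness in some `‖·‖₋p`). -/
theorem stmt10 (F : ℕ → Finset ℕ → ℂ)
    (hgrow : ∀ n : ℕ, ∃ C ≥ (0 : ℝ), ∃ r ≥ (0 : ℝ),
      ∀ σ : Finset ℕ, ‖F n σ‖ ≤ C * lam σ ^ r)
    (hmart : ∀ (n : ℕ) (σ : Finset ℕ),
      F n σ = (if σ ⊆ Finset.range (n + 1) then (1 : ℂ) else 0) * F (n + 1) σ) :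
    (∃ G : Finset ℕ → ℂ, ∃ q ≥ (0 : ℝ),
        Summable (fun σ : Finset ℕ => lam σ ^ (-(2 * q)) * ‖G σ‖ ^ 2) ∧
        (∀ n : ℕ,
          Summable (fun σ : Finset ℕ => lam σ ^ (-(2 * q)) * ‖F n σ‖ ^ 2)) ∧
        Tendsto
          (fun n : ℕ => ∑' σ : Finset ℕ, lam σ ^ (-(2 * q)) * ‖F n σ - G σ‖ ^ 2)
          atTop (nhds 0))
      ↔
    (∃ p ≥ (0 : ℝ), ∃ K : ℝ,
        ∀ n : ℕ,
          Summable (fun σ : Finset ℕ => lam σ ^ (-(2 * p)) * ‖F n σ‖ ^ 2) ∧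
          (∑' σ : Finset ℕ, lam σ ^ (-(2 * p)) * ‖F n σ‖ ^ 2) ≤ K) := by
  constructor
  · rintro ⟨G, q, hq, hGsum, hFsum, htend⟩
    set w : Finset ℕ → ℝ := fun σ => lam σ ^ (-(2 * q)) with hw
    have hw0 : ∀ σ, 0 ≤ w σ := fun σ => Real.rpow_nonneg (lam_pos σ).le _
    -- summability of differences
    have hdsum : ∀ n, Summable (fun σ => w σ * ‖F n σ - G σ‖ ^ 2) := by
      intro n
      refine Summable.of_nonneg_of_le
        (fun σ => mul_nonneg (hw0 σ) (sq_nonneg _)) (fun σ => ?_)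
        (((hFsum n).mul_left 2).add (hGsum.mul_left 2))
      have h := sq_abs_le_two (F n σ - G σ) (F n σ)
      have h2 : ‖F n σ - G σ‖ ^ 2
          ≤ 2 * ‖F n σ‖ ^ 2 + 2 * ‖G σ‖ ^ 2 := by
        simpa [sub_sub_cancel_left, map_neg, add_comm] using h
      nlinarith [hw0 σ, sq_nonneg (‖F n σ - G σ‖)]
    obtain ⟨B, hB⟩ : ∃ B, ∀ n,
        (∑' σ, w σ * ‖F n σ - G σ‖ ^ 2) ≤ B := by
      obtain ⟨B, hB⟩ := htend.bddAbove_range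
      exact ⟨B, fun n => hB ⟨n, rfl⟩⟩
    refine ⟨q, hq, 2 * B + 2 * ∑' σ, w σ * ‖G σ‖ ^ 2, fun n => ⟨hFsum n, ?_⟩⟩
    have hle : ∀ σ, w σ * ‖F n σ‖ ^ 2
        ≤ 2 * (w σ * ‖F n σ - G σ‖ ^ 2)
          + 2 * (w σ * ‖G σ‖ ^ 2) := by
      intro σ
      have h := sq_abs_le_two (F n σ) (G σ)
      nlinarith [hw0 σ, sq_nonneg (‖F n σ‖)]
    have hsumRHS : Summable (fun σ => 2 * (w σ * ‖F n σ - G σ‖ ^ 2)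
        + 2 * (w σ * ‖G σ‖ ^ 2)) :=
      ((hdsum n).mul_left 2).add (hGsum.mul_left 2)
    calc (∑' σ, w σ * ‖F n σ‖ ^ 2)
        ≤ ∑' σ, (2 * (w σ * ‖F n σ - G σ‖ ^ 2)
          + 2 * (w σ * ‖G σ‖ ^ 2)) :=
          Summable.tsum_le_tsum hle (hFsum n) hsumRHS
      _ = 2 * (∑' σ, w σ * ‖F n σ - G σ‖ ^ 2)
          + 2 * ∑' σ, w σ * ‖G σ‖ ^ 2 := by
          rw [Summable.tsum_add ((hdsum n).mul_left 2) (hGsum.mul_left 2), tsum_mul_left,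
            tsum_mul_left]
      _ ≤ 2 * B + 2 * ∑' σ, w σ * ‖G σ‖ ^ 2 := by
          have := hB n
          gcongr
  · rintro ⟨p, hp, K, hK⟩
    set G : Finset ℕ → ℂ := fun σ => F (σ.sup id) σ with hGdef
    set g : Finset ℕ → ℝ := fun σ => lam σ ^ (-(2 * p)) * ‖G σ‖ ^ 2 with hgdef
    have hg0 : ∀ σ, 0 ≤ g σ :=
      fun σ => mul_nonneg (Real.rpow_nonneg (lam_pos σ).le _) (sq_nonneg _)
    -- `g` is summable with bounded partial sums
    have hgsum : Summable g := by
      apply summable_of_sum_le hg0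
      intro s
      set N : ℕ := s.sup (fun σ => σ.sup id) with hN
      have hmem : ∀ σ ∈ s, σ ⊆ Finset.range (N + 1) := by
        intro σ hσ
        exact (self_sub_range σ).trans (Finset.range_subset_range.mpr
          (Nat.succ_le_succ (Finset.le_sup (f := fun σ => σ.sup id) hσ)))
      have heq : ∀ σ ∈ s, g σ = lam σ ^ (-(2 * p)) * ‖F N σ‖ ^ 2 := by
        intro σ hσ
        rw [F_eq F hmart N σ, if_pos (hmem σ hσ)]
      calc ∑ σ ∈ s, g σ = ∑ σ ∈ s, lam σ ^ (-(2 * p)) * ‖F N σ‖ ^ 2 :=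
            Finset.sum_congr rfl heq
        _ ≤ ∑' σ, lam σ ^ (-(2 * p)) * ‖F N σ‖ ^ 2 :=
            Summable.sum_le_tsum s (fun σ _ => mul_nonneg (Real.rpow_nonneg (lam_pos σ).le _)
              (sq_nonneg _)) (hK N).1
        _ ≤ K := (hK N).2
    refine ⟨G, p, hp, hgsum, fun n => (hK n).1, ?_⟩
    -- the difference terms
    have hpt : ∀ n σ, lam σ ^ (-(2 * p)) * ‖F n σ - G σ‖ ^ 2
        = if σ ⊆ Finset.range (n + 1) then 0 else g σ := by
      intro n σ
      split_ifs with h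
      · rw [F_eq F hmart n σ, if_pos h]
        simp [hGdef]
      · rw [F_eq F hmart n σ, if_neg h]
        simp [hgdef, hGdef]
    have hind : ∀ n, Summable (fun σ => if σ ⊆ Finset.range (n + 1) then g σ else 0) := by
      intro n
      refine Summable.of_nonneg_of_le (fun σ => ?_) (fun σ => ?_) hgsum <;>
        · split_ifs <;> simp [hg0 σ]
    have hcoind : ∀ n, Summable (fun σ => if σ ⊆ Finset.range (n + 1) then 0 else g σ) := by
      intro n
      refine Summable.of_nonneg_of_le (fun σ => ?_) (fun σ => ?_) hgsum <;>
        · split_ifs <;> simp [hg0 σ]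
    have hsplit : ∀ n, (∑' σ, if σ ⊆ Finset.range (n + 1) then 0 else g σ)
        = (∑' σ, g σ) - ∑ σ ∈ (Finset.range (n + 1)).powerset, g σ := by
      intro n
      have hadd : g = fun σ => (if σ ⊆ Finset.range (n + 1) then g σ else 0)
          + (if σ ⊆ Finset.range (n + 1) then 0 else g σ) := by
        funext σ; split_ifs <;> ring
      have htsum : (∑' σ, g σ)
          = (∑' σ, if σ ⊆ Finset.range (n + 1) then g σ else 0)
            + ∑' σ, if σ ⊆ Finset.range (n + 1) then 0 else g σ := by
        conv_lhs => rw [hadd]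
        exact Summable.tsum_add (hind n) (hcoind n)
      have hfin : (∑' σ, if σ ⊆ Finset.range (n + 1) then g σ else 0)
          = ∑ σ ∈ (Finset.range (n + 1)).powerset, g σ := by
        rw [tsum_eq_sum (s := (Finset.range (n + 1)).powerset)]
        · apply Finset.sum_congr rfl
          intro σ hσ
          rw [if_pos (Finset.mem_powerset.mp hσ)]
        · intro σ hσ
          rw [if_neg (fun h => hσ (Finset.mem_powerset.mpr h))]
      rw [htsum, hfin]; ring
    -- partial sums over powersets tend to the full sum
    have hfinset : Tendsto (fun n : ℕ => (Finset.range (n + 1)).powerset) atTop atTop := by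
      apply tendsto_atTop_finset_of_monotone
      · intro n m hnm
        exact Finset.powerset_mono.mpr (Finset.range_subset_range.mpr (by omega))
      · intro σ
        exact ⟨σ.sup id, Finset.mem_powerset.mpr (self_sub_range σ)⟩
    have hS : Tendsto (fun n : ℕ => ∑ σ ∈ (Finset.range (n + 1)).powerset, g σ)
        atTop (nhds (∑' σ, g σ)) := hgsum.hasSum.comp hfinset
    have hkey : Tendsto (fun n : ℕ =>
        (∑' σ, g σ) - ∑ σ ∈ (Finset.range (n + 1)).powerset, g σ) atTop (nhds 0) := by
      have := tendsto_const_nhds (x := (∑' σ, g σ)) (f := atTop (α := ℕ)) |>.sub hS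
      simpa using this
    have hfun : (fun n : ℕ => ∑' σ : Finset ℕ,
        lam σ ^ (-(2 * p)) * ‖F n σ - G σ‖ ^ 2)
        = fun n : ℕ => (∑' σ, g σ) - ∑ σ ∈ (Finset.range (n + 1)).powerset, g σ := by
      funext n
      rw [← hsplit n]
      exact tsum_congr (hpt n)
    rw [hfun]
    exact hkey
end

section
/- Define F_n : Γ → ℂ by F_n(σ) = 1 if σ ⊆ {0,...,n} and F_n(σ) = 0 otherwise. Then (F_n)_{n≥0} satisfies the generalized-martingale relation F_n(σ) = 𝟏_{n]}(σ)·F_{n+1}(σ) for all σ and n, and for every real q > 1/2 the family σ ↦ λ_σ^{-2q}|F_n(σ) − 1|² is summable with ∑_{σ∈Γ} λ_σ^{-2q}|F_n(σ) − 1|² → 0 as n → ∞. (Thus the sequence (Ψ_n^{(0)}) with Fock transforms F_n is an M-generalized martingale converging strongly in S^*(M) to the generalized functional with constant Fock transform 1.) -/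
open Filter Topology

/-- The Fock transform of `Ψ_n^{(0)} = ∑_{τ ⊆ {0,...,n}} Z_τ`, i.e. the indicator
`F_n(σ) = 𝟏_{n]}(σ)`. -/
noncomputable def Fzero (n : ℕ) (σ : Finset ℕ) : ℂ :=
  if σ ⊆ Finset.range (n + 1) then 1 else 0

lemma lam_rpow_eq (σ : Finset ℕ) (r : ℝ) :
    lam σ ^ r = ∏ k ∈ σ, ((k : ℝ) + 1) ^ r := by
  unfold lam
  exact (Real.finset_prod_rpow σ (fun k => (k : ℝ) + 1) (fun i _ => by positivity) r).symm

lemma summable_aux_s11 {q : ℝ} (hq : 1 / 2 < q) :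
    Summable (fun σ : Finset ℕ => lam σ ^ (-(2 * q))) := by
  set f : ℕ → ℝ := fun k => ((k : ℝ) + 1) ^ (-(2 * q)) with hf
  have hfnn : ∀ k, 0 ≤ f k := fun k => by positivity
  have hfs : Summable f := by
    have : Summable (fun k : ℕ => ((k : ℝ)) ^ (-(2 * q))) :=
      Real.summable_nat_rpow.2 (by linarith)
    have := (summable_nat_add_iff 1).2 this
    refine this.congr fun k => ?_
    push_cast
    rw [hf]
  refine summable_of_sum_le (c := Real.exp (∑' k, f k))
    (fun σ => Real.rpow_nonneg (lam_pos σ).le _) (fun u => ?_)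
  set N := (u.sup fun σ => σ.sup id) + 1 with hN
  have hsub : u ⊆ (Finset.range N).powerset := by
    intro σ hσ
    rw [Finset.mem_powerset]
    intro k hk
    rw [Finset.mem_range, hN]
    have h1 : k ≤ σ.sup id := Finset.le_sup (f := id) hk
    have h2 : σ.sup id ≤ u.sup fun σ => σ.sup id := Finset.le_sup hσ
    omega
  calc ∑ σ ∈ u, lam σ ^ (-(2 * q))
      ≤ ∑ σ ∈ (Finset.range N).powerset, lam σ ^ (-(2 * q)) :=
        Finset.sum_le_sum_of_subset_of_nonneg hsub (fun σ _ _ => Real.rpow_nonneg (lam_pos σ).le _)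
    _ = ∏ k ∈ Finset.range N, (f k + 1) := by
        rw [Finset.prod_add]
        refine Finset.sum_congr rfl fun σ _ => ?_
        rw [lam_rpow_eq]
        simp [hf]
    _ ≤ ∏ k ∈ Finset.range N, Real.exp (f k) := by
        refine Finset.prod_le_prod (fun k _ => by positivity) fun k _ => ?_
        exact Real.add_one_le_exp (f k)
    _ = Real.exp (∑ k ∈ Finset.range N, f k) := by rw [Real.exp_sum]
    _ ≤ Real.exp (∑' k, f k) :=
        Real.exp_le_exp.2 ((Summable.sum_le_tsum _ (fun k _ => hfnn k) hfs))

/-- The sequence with Fock transforms `F_n = 𝟏_{n]}` is an `M`-generalized martingale and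
converges strongly in `S^*(M)` to the generalized functional with constant Fock transform `1`:
for every `q > 1/2`, `∑_σ lam σ^(-2q) |F_n(σ) - 1|² → 0`. -/
theorem stmt11 :
    (∀ (n : ℕ) (σ : Finset ℕ),
      Fzero n σ = (if σ ⊆ Finset.range (n + 1) then (1 : ℂ) else 0) * Fzero (n + 1) σ) ∧
    ∀ q : ℝ, 1 / 2 < q →
      (∀ n : ℕ,
        Summable (fun σ : Finset ℕ => lam σ ^ (-(2 * q)) * ‖Fzero n σ - 1‖ ^ 2)) ∧
      Tendsto
        (fun n : ℕ => ∑' σ : Finset ℕ, lam σ ^ (-(2 * q)) * ‖Fzero n σ - 1‖ ^ 2)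
        atTop (nhds 0) := by
  constructor
  · intro n σ
    unfold Fzero
    by_cases h : σ ⊆ Finset.range (n + 1)
    · have h2 : σ ⊆ Finset.range (n + 1 + 1) :=
        h.trans (Finset.range_subset_range.2 (by omega))
      simp [h, h2]
    · simp [h]
  intro q hq
  have hterm : ∀ (n : ℕ) (σ : Finset ℕ),
      lam σ ^ (-(2 * q)) * ‖Fzero n σ - 1‖ ^ 2
      = if σ ⊆ Finset.range (n + 1) then 0 else lam σ ^ (-(2 * q)) := by
    intro n σ
    unfold Fzero
    split <;> simp
  have ha := summable_aux_s11 hq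
  have hann : ∀ σ : Finset ℕ, 0 ≤ lam σ ^ (-(2 * q)) := fun σ => Real.rpow_nonneg (lam_pos σ).le _
  have hle : ∀ (n : ℕ) (σ : Finset ℕ),
      lam σ ^ (-(2 * q)) * ‖Fzero n σ - 1‖ ^ 2 ≤ lam σ ^ (-(2 * q)) := by
    intro n σ
    rw [hterm]
    split
    · exact hann σ
    · exact le_rfl
  constructor
  · intro n
    refine Summable.of_nonneg_of_le (fun σ => mul_nonneg (hann σ) (by positivity)) (hle n) ha
  · have h0 : (0 : ℝ) = ∑' σ : Finset ℕ, (0 : ℝ) := by simp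
    rw [h0]
    refine tendsto_tsum_of_dominated_convergence ha (fun σ => ?_) ?_
    · refine Tendsto.congr' ?_ tendsto_const_nhds
      filter_upwards [eventually_ge_atTop (σ.sup id)] with n hn
      have hsub : σ ⊆ Finset.range (n + 1) := by
        intro k hk
        have : k ≤ σ.sup id := Finset.le_sup (f := id) hk
        rw [Finset.mem_range]; omega
      rw [hterm, if_pos hsub]
    · filter_upwards with n σ
      rw [Real.norm_eq_abs, abs_of_nonneg (mul_nonneg (hann σ) (by positivity))]
      exact hle n σ
end

section
/- The family (Z_σ), indexed by the finite subsets σ of ℕ, is an orthonormal system in L²(Ω, 𝓕, P): for all finite subsets σ, τ of ℕ, E[Z_σ · Z_τ] = 1 if σ = τ and E[Z_σ · Z_τ] = 0 if σ ≠ τ. -/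
open Filter Topology MeasureTheory

lemma stmt15_mul_integrable {Ω : Type*} {m0 : MeasurableSpace Ω} {μ : Measure Ω} (f g : Ω → ℝ)
    (hf : MemLp f 2 μ) (hg : MemLp g 2 μ) : Integrable (fun ω => f ω * g ω) μ := by
  have := hg.smul (φ := f) hf (r := 1)
  exact memLp_one_iff_integrable.mp this

lemma stmt15_pullout {Ω : Type*} {m0 : MeasurableSpace Ω} {μ : Measure Ω} [IsProbabilityMeasure μ]
    {m : MeasurableSpace Ω} (hm : m ≤ m0) {X g : Ω → ℝ}
    (hX : StronglyMeasurable[m] X) (hXg : Integrable (X * g) μ) (hg : Integrable g μ)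
    {c : ℝ} (hc : μ[g|m] =ᵐ[μ] fun _ => c) :
    ∫ ω, X ω * g ω ∂μ = ∫ ω, X ω * c ∂μ := by
  have h1 : ∫ ω, (X * g) ω ∂μ = ∫ ω, (μ[X * g|m]) ω ∂μ := (integral_condExp hm).symm
  have h2 : μ[X * g|m] =ᵐ[μ] fun ω => X ω * c := by
    refine (condExp_mul_of_stronglyMeasurable_left hX hXg hg).trans ?_
    filter_upwards [hc] with ω hω
    simp [hω]
  calc ∫ ω, X ω * g ω ∂μ = ∫ ω, (μ[X * g|m]) ω ∂μ := h1
    _ = ∫ ω, X ω * c ∂μ := integral_congr_ae h2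

/-- The family `(Z_σ)`, `Z_σ = ∏_{i∈σ} Z_i`, indexed by the finite subsets of `ℕ`, is an
orthonormal system in `L²(Ω, 𝓕, P)`: `E[Z_σ · Z_τ] = 1` if `σ = τ` and `= 0` otherwise. -/
theorem stmt15 {Ω : Type*} {m0 : MeasurableSpace Ω} (μ : Measure Ω) [IsProbabilityMeasure μ]
    (Z : ℕ → Ω → ℝ) (hZmeas : ∀ n, Measurable (Z n))
    (𝓕 : ℕ → MeasurableSpace Ω)
    (h𝓕 : ∀ n, 𝓕 n = ⨆ i ∈ Set.Iic n, MeasurableSpace.comap (Z i)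
      (inferInstance : MeasurableSpace ℝ))
    (h𝓕le : ∀ n, 𝓕 n ≤ m0)
    (hZ0 : ∫ ω, Z 0 ω ∂μ = 0)
    (hZ0sq : ∫ ω, (Z 0 ω) ^ 2 ∂μ = 1)
    (hcond : ∀ n : ℕ, μ[Z (n + 1)|𝓕 n] =ᵐ[μ] fun _ => 0)
    (hcondsq : ∀ n : ℕ, μ[(fun ω => (Z (n + 1) ω) ^ 2)|𝓕 n] =ᵐ[μ] fun _ => 1)
    (hsq : ∀ σ : Finset ℕ, MemLp (fun ω => ∏ i ∈ σ, Z i ω) 2 μ) :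
    ∀ σ τ : Finset ℕ,
      ∫ ω, (∏ i ∈ σ, Z i ω) * (∏ i ∈ τ, Z i ω) ∂μ = if σ = τ then 1 else 0 := by
  have hZ1 : ∀ n, MemLp (Z n) 2 μ := fun n => by simpa using hsq {n}
  -- measurability of products with indices ≤ m w.r.t. 𝓕 m
  have hprodmeas : ∀ (m : ℕ) (s : Finset ℕ), s ⊆ Finset.range (m + 1) →
      Measurable[𝓕 m] (fun ω => ∏ i ∈ s, Z i ω) := by
    intro m s hs
    apply Finset.measurable_prod
    intro i hi
    have him : i ∈ Set.Iic m := by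
      have := hs hi; rw [Finset.mem_range] at this; simp only [Set.mem_Iic]; omega
    have hle : MeasurableSpace.comap (Z i) inferInstance ≤ 𝓕 m := by
      rw [h𝓕 m]
      exact le_iSup₂ (f := fun j (_ : j ∈ Set.Iic m) =>
        MeasurableSpace.comap (Z j) inferInstance) i him
    exact measurable_iff_comap_le.mpr hle
  -- the main induction
  have main : ∀ n (σ τ : Finset ℕ), σ ⊆ Finset.range n → τ ⊆ Finset.range n →
      ∫ ω, (∏ i ∈ σ, Z i ω) * (∏ i ∈ τ, Z i ω) ∂μ = if σ = τ then 1 else 0 := by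
    intro n
    induction n with
    | zero =>
      intro σ τ hσ hτ
      rw [Finset.range_zero, Finset.subset_empty] at hσ hτ
      subst hσ; subst hτ
      simp
    | succ n IH =>
      intro σ τ hσ hτ
      by_cases hnσ : n ∈ σ <;> by_cases hnτ : n ∈ τ
      · -- n in both σ and τ
        set s := σ.erase n with hs_def
        set t := τ.erase n with ht_def
        have hs : s ⊆ Finset.range n := by
          intro x hx
          rw [Finset.mem_erase] at hx
          have := hσ hx.2; rw [Finset.mem_range] at this ⊢; omega
        have ht : t ⊆ Finset.range n := by
          intro x hx
          rw [Finset.mem_erase] at hx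
          have := hτ hx.2; rw [Finset.mem_range] at this ⊢; omega
        have hστ : (σ = τ) ↔ (s = t) := by
          constructor
          · intro h; rw [hs_def, ht_def, h]
          · intro h
            rw [← Finset.insert_erase hnσ, ← Finset.insert_erase hnτ, ← hs_def, ← ht_def, h]
        have hfun : (fun ω => (∏ i ∈ σ, Z i ω) * (∏ i ∈ τ, Z i ω)) =
            (fun ω => (∏ i ∈ s, Z i ω) * (∏ i ∈ t, Z i ω)) * (fun ω => (Z n ω) ^ 2) := by
          funext ω
          rw [← Finset.mul_prod_erase σ (fun i => Z i ω) hnσ,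
            ← Finset.mul_prod_erase τ (fun i => Z i ω) hnτ]
          simp only [Pi.mul_apply, ← hs_def, ← ht_def]
          ring
        rw [if_congr hστ rfl rfl]
        rcases n with _ | m
        · -- n = 0 : s = t = ∅, σ = τ = {0}
          rw [Finset.range_zero, Finset.subset_empty] at hs ht
          have hσ0 : σ = {0} := by
            rw [← Finset.insert_erase hnσ, ← hs_def, hs]; rfl
          have hτ0 : τ = {0} := by
            rw [← Finset.insert_erase hnτ, ← ht_def, ht]; rfl
          rw [hs, ht, if_pos rfl, hσ0, hτ0]
          simp only [Finset.prod_singleton]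
          rw [← hZ0sq]
          congr 1; funext ω; ring
        · -- n = m + 1
          have hX : StronglyMeasurable[𝓕 m]
              (fun ω => (∏ i ∈ s, Z i ω) * (∏ i ∈ t, Z i ω)) :=
            ((hprodmeas m s hs).mul (hprodmeas m t ht)).stronglyMeasurable
          have hXg : Integrable ((fun ω => (∏ i ∈ s, Z i ω) * (∏ i ∈ t, Z i ω)) *
              (fun ω => (Z (m + 1) ω) ^ 2)) μ := by
            rw [← hfun]
            exact stmt15_mul_integrable _ _ (hsq σ) (hsq τ)
          have hg : Integrable (fun ω => (Z (m + 1) ω) ^ 2) μ := by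
            simpa [pow_two] using stmt15_mul_integrable _ _ (hZ1 (m + 1)) (hZ1 (m + 1))
          calc ∫ ω, (∏ i ∈ σ, Z i ω) * (∏ i ∈ τ, Z i ω) ∂μ
              = ∫ ω, ((∏ i ∈ s, Z i ω) * (∏ i ∈ t, Z i ω)) * (Z (m + 1) ω) ^ 2 ∂μ := by
                exact integral_congr_ae (Eventually.of_forall (congrFun hfun))
            _ = ∫ ω, ((∏ i ∈ s, Z i ω) * (∏ i ∈ t, Z i ω)) * 1 ∂μ :=
                stmt15_pullout (h𝓕le m) hX hXg hg (hcondsq m)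
            _ = ∫ ω, (∏ i ∈ s, Z i ω) * (∏ i ∈ t, Z i ω) ∂μ := by simp
            _ = if s = t then 1 else 0 := IH s t hs ht
      · -- n ∈ σ, n ∉ τ
        have hne : σ ≠ τ := fun h => hnτ (h ▸ hnσ)
        rw [if_neg hne]
        set s := σ.erase n with hs_def
        have hs : s ⊆ Finset.range n := by
          intro x hx
          rw [Finset.mem_erase] at hx
          have := hσ hx.2; rw [Finset.mem_range] at this ⊢; omega
        have ht : τ ⊆ Finset.range n := by
          intro x hx
          have := hτ hx; rw [Finset.mem_range] at this ⊢
          rcases Nat.lt_succ_iff_lt_or_eq.mp this with h | h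
          · exact h
          · exact absurd (h ▸ hx) hnτ
        have hfun : (fun ω => (∏ i ∈ σ, Z i ω) * (∏ i ∈ τ, Z i ω)) =
            (fun ω => (∏ i ∈ s, Z i ω) * (∏ i ∈ τ, Z i ω)) * (fun ω => Z n ω) := by
          funext ω
          rw [← Finset.mul_prod_erase σ (fun i => Z i ω) hnσ]
          simp only [Pi.mul_apply, ← hs_def]
          ring
        rcases n with _ | m
        · -- n = 0 : s = τ = ∅, σ = {0}
          rw [Finset.range_zero, Finset.subset_empty] at hs ht
          have hσ0 : σ = {0} := by
            rw [← Finset.insert_erase hnσ, ← hs_def, hs]; rfl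
          rw [hσ0, ht]
          simpa using hZ0
        · -- n = m + 1
          have hX : StronglyMeasurable[𝓕 m]
              (fun ω => (∏ i ∈ s, Z i ω) * (∏ i ∈ τ, Z i ω)) :=
            ((hprodmeas m s hs).mul (hprodmeas m τ ht)).stronglyMeasurable
          have hXg : Integrable ((fun ω => (∏ i ∈ s, Z i ω) * (∏ i ∈ τ, Z i ω)) *
              (fun ω => Z (m + 1) ω)) μ := by
            rw [← hfun]
            exact stmt15_mul_integrable _ _ (hsq σ) (hsq τ)
          have hg : Integrable (fun ω => Z (m + 1) ω) μ := (hZ1 (m + 1)).integrable one_le_two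
          calc ∫ ω, (∏ i ∈ σ, Z i ω) * (∏ i ∈ τ, Z i ω) ∂μ
              = ∫ ω, ((∏ i ∈ s, Z i ω) * (∏ i ∈ τ, Z i ω)) * Z (m + 1) ω ∂μ :=
                integral_congr_ae (Eventually.of_forall (congrFun hfun))
            _ = ∫ ω, ((∏ i ∈ s, Z i ω) * (∏ i ∈ τ, Z i ω)) * 0 ∂μ :=
                stmt15_pullout (h𝓕le m) hX hXg hg (hcond m)
            _ = 0 := by simp
      · -- n ∉ σ, n ∈ τ
        have hne : σ ≠ τ := fun h => hnσ (h ▸ hnτ)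
        rw [if_neg hne]
        set t := τ.erase n with ht_def
        have ht : t ⊆ Finset.range n := by
          intro x hx
          rw [Finset.mem_erase] at hx
          have := hτ hx.2; rw [Finset.mem_range] at this ⊢; omega
        have hs : σ ⊆ Finset.range n := by
          intro x hx
          have := hσ hx; rw [Finset.mem_range] at this ⊢
          rcases Nat.lt_succ_iff_lt_or_eq.mp this with h | h
          · exact h
          · exact absurd (h ▸ hx) hnσ
        have hfun : (fun ω => (∏ i ∈ σ, Z i ω) * (∏ i ∈ τ, Z i ω)) =
            (fun ω => (∏ i ∈ σ, Z i ω) * (∏ i ∈ t, Z i ω)) * (fun ω => Z n ω) := by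
          funext ω
          rw [← Finset.mul_prod_erase τ (fun i => Z i ω) hnτ]
          simp only [Pi.mul_apply, ← ht_def]
          ring
        rcases n with _ | m
        · rw [Finset.range_zero, Finset.subset_empty] at hs ht
          have hτ0 : τ = {0} := by
            rw [← Finset.insert_erase hnτ, ← ht_def, ht]; rfl
          rw [hτ0, hs]
          simpa using hZ0
        · have hX : StronglyMeasurable[𝓕 m]
              (fun ω => (∏ i ∈ σ, Z i ω) * (∏ i ∈ t, Z i ω)) :=
            ((hprodmeas m σ hs).mul (hprodmeas m t ht)).stronglyMeasurable
          have hXg : Integrable ((fun ω => (∏ i ∈ σ, Z i ω) * (∏ i ∈ t, Z i ω)) *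
              (fun ω => Z (m + 1) ω)) μ := by
            rw [← hfun]
            exact stmt15_mul_integrable _ _ (hsq σ) (hsq τ)
          have hg : Integrable (fun ω => Z (m + 1) ω) μ := (hZ1 (m + 1)).integrable one_le_two
          calc ∫ ω, (∏ i ∈ σ, Z i ω) * (∏ i ∈ τ, Z i ω) ∂μ
              = ∫ ω, ((∏ i ∈ σ, Z i ω) * (∏ i ∈ t, Z i ω)) * Z (m + 1) ω ∂μ :=
                integral_congr_ae (Eventually.of_forall (congrFun hfun))
            _ = ∫ ω, ((∏ i ∈ σ, Z i ω) * (∏ i ∈ t, Z i ω)) * 0 ∂μ :=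
                stmt15_pullout (h𝓕le m) hX hXg hg (hcond m)
            _ = 0 := by simp
      · -- n in neither
        have hs : σ ⊆ Finset.range n := by
          intro x hx
          have := hσ hx; rw [Finset.mem_range] at this ⊢
          rcases Nat.lt_succ_iff_lt_or_eq.mp this with h | h
          · exact h
          · exact absurd (h ▸ hx) hnσ
        have ht : τ ⊆ Finset.range n := by
          intro x hx
          have := hτ hx; rw [Finset.mem_range] at this ⊢
          rcases Nat.lt_succ_iff_lt_or_eq.mp this with h | h
          · exact h
          · exact absurd (h ▸ hx) hnτ
        exact IH σ τ hs ht
  intro σ τ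
  obtain ⟨n, hn⟩ := (σ ∪ τ).exists_nat_subset_range
  exact main n σ τ ((Finset.subset_union_left).trans hn) ((Finset.subset_union_right).trans hn)
end
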